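/- Let b be an extreme point of the closed unit ball of H^∞. For any sequence (λ_n) ⊂ 𝔻 with |λ_n| → 1 and limsup |b(λ_n)| < 1, the normalized reproducing kernels k_{λ_n}^b/‖k_{λ_n}^b‖_b converge weakly to 0 in ℋ(b). -/

import Mathlib

open Complex Metric MeasureTheory Filter Set Topology

noncomputable section

/-- `φ` is a bounded analytic function on the open unit disc (i.e. `φ ∈ H^∞`). -/
def Hinf (φ : ℂ → ℂ) : Prop :=
  DifferentiableOn ℂ φ (Metric.ball (0:ℂ) 1) ∧
    ∃ M : ℝ, ∀ z ∈ Metric.ball (0:ℂ) 1, ‖φ z‖ ≤ M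

/-- The closed unit ball of `H^∞`. -/
def unitBallHinf : Set (ℂ → ℂ) :=
  {g | DifferentiableOn ℂ g (Metric.ball (0:ℂ) 1) ∧ ∀ z ∈ Metric.ball (0:ℂ) 1, ‖g z‖ ≤ 1}

/-- `b` is an extreme point of the closed unit ball of `H^∞` (functions being identified
when they agree on the unit disc). -/
def IsExtremePt (b : ℂ → ℂ) : Prop :=
  b ∈ unitBallHinf ∧ ∀ g ∈ unitBallHinf, ∀ h ∈ unitBallHinf,
    (∀ z ∈ Metric.ball (0:ℂ) 1, b z = (g z + h z) / 2) →
    ∀ z ∈ Metric.ball (0:ℂ) 1, g z = h z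

/-- `b` is a non-extreme point of the closed unit ball of `H^∞`. -/
def IsNonExtremePt (b : ℂ → ℂ) : Prop := b ∈ unitBallHinf ∧ ¬ IsExtremePt b

/-- The spectrum `σ(b) = {ζ ∈ clos 𝔻 : liminf_{z→ζ, z∈𝔻} |b z| < 1}`. -/
def specb (b : ℂ → ℂ) : Set ℂ :=
  {ζ | ζ ∈ closure (Metric.ball (0:ℂ) 1) ∧
    Filter.liminf (fun z => ‖b z‖) (nhdsWithin ζ (Metric.ball (0:ℂ) 1)) < 1}

/-- Arc-length (Lebesgue) measure on the unit circle, realized as the pushforward of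
Lebesgue measure on `[0, 2π)` by `θ ↦ exp(iθ)`. -/
def circleMeasure : Measure ℂ :=
  Measure.map (fun θ : ℝ => Complex.exp (θ * Complex.I))
    (volume.restrict (Set.Ico (0:ℝ) (2 * Real.pi)))

/-- `b` is an inner function: `b ∈ H^∞` and the radial limits of `|b|` equal `1`
almost everywhere on the unit circle. -/
def IsInnerFn (b : ℂ → ℂ) : Prop :=
  Hinf b ∧ ∀ᵐ (θ : ℝ) ∂(volume.restrict (Set.Ico (0:ℝ) (2 * Real.pi))),
    Filter.Tendsto (fun r : ℝ => ‖b ((r : ℂ) * Complex.exp (θ * Complex.I))‖)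
      (nhdsWithin 1 (Set.Iio 1)) (nhds 1)

/-- A bounded operator is hypercyclic if some vector has dense orbit. -/
def Hypercyclic {H : Type*} [NormedAddCommGroup H] [NormedSpace ℂ H]
    (T : H →L[ℂ] H) : Prop :=
  ∃ x : H, Dense (Set.range fun n : ℕ => (T ^ n) x)

/-- Lower density of a set of natural numbers. -/
def lowerDensity (A : Set ℕ) : ℝ :=
  Filter.liminf (fun N : ℕ => (Nat.card ↥(A ∩ Set.Iio N) : ℝ) / N) Filter.atTop

/-- A bounded operator is frequently hypercyclic if some vector visits every nonempty
open set along a set of instants of positive lower density. -/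
def FreqHypercyclic {H : Type*} [NormedAddCommGroup H] [NormedSpace ℂ H]
    (T : H →L[ℂ] H) : Prop :=
  ∃ x : H, ∀ U : Set H, IsOpen U → U.Nonempty →
    0 < lowerDensity {n : ℕ | (T ^ n) x ∈ U}

/--
Abstract model of the Hardy-space / de Branges–Rovnyak setting attached to a function
`b` in the closed unit ball of `H^∞`:
* `H2` is the Hardy space `H²`, realized as the reproducing-kernel Hilbert space of
  analytic functions on `𝔻` with Szegő kernel `k_λ(z) = (1 - conj λ z)⁻¹`;
* `Hb` is the de Branges–Rovnyak space `ℋ(b)`, the RKHS with kernel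
  `k_λ^b(z) = (1 - conj (b λ) b z) / (1 - conj λ z)`, contractively contained in `H²`
  via `j`;
* `mul φ` is the multiplication (analytic Toeplitz) operator `M_φ = T_φ` on `H²` for
  `φ ∈ H^∞` (so the co-analytic Toeplitz operator `T_{φ̄}` is its adjoint), and
  `toepb φ` is the restriction of `T_{φ̄}` to `ℋ(b)`;
* `L2` is `L²(𝕋) ⊇ H²` with isometric embedding `emb`, Riesz projection
  `P₊ = Pplus` (the adjoint of `emb`), and multiplication operators `mulL2 u` by
  boundary functions `u`, pinned down on continuous symbols by norm bounds,
  additivity, multiplicativity, the adjoint rule and compatibility with `mul` on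
  the disc algebra;
* `shiftb` is the restricted backward shift `X_b = S*|ℋ(b)`.
-/
structure DBR (b : ℂ → ℂ) (H2 Hb L2 : Type*)
    [NormedAddCommGroup H2] [InnerProductSpace ℂ H2] [CompleteSpace H2]
    [NormedAddCommGroup Hb] [InnerProductSpace ℂ Hb] [CompleteSpace Hb]
    [NormedAddCommGroup L2] [InnerProductSpace ℂ L2] [CompleteSpace L2] where
  h2Fun : H2 →ₗ[ℂ] (ℂ → ℂ)
  h2Fun_inj : ∀ f : H2, (∀ z ∈ Metric.ball (0:ℂ) 1, h2Fun f z = 0) → f = 0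
  szego : ℂ → H2
  h2_repro : ∀ f : H2, ∀ l ∈ Metric.ball (0:ℂ) 1, h2Fun f l = inner ℂ (szego l) f
  szego_eq : ∀ l ∈ Metric.ball (0:ℂ) 1, ∀ z ∈ Metric.ball (0:ℂ) 1,
      h2Fun (szego l) z = (1 - (starRingEnd ℂ) l * z)⁻¹
  hbFun : Hb →ₗ[ℂ] (ℂ → ℂ)
  hbFun_inj : ∀ f : Hb, (∀ z ∈ Metric.ball (0:ℂ) 1, hbFun f z = 0) → f = 0
  hbker : ℂ → Hb
  hb_repro : ∀ f : Hb, ∀ l ∈ Metric.ball (0:ℂ) 1, hbFun f l = inner ℂ (hbker l) f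
  hbker_eq : ∀ l ∈ Metric.ball (0:ℂ) 1, ∀ z ∈ Metric.ball (0:ℂ) 1,
      hbFun (hbker l) z =
        (1 - (starRingEnd ℂ) (b l) * b z) / (1 - (starRingEnd ℂ) l * z)
  j : Hb →L[ℂ] H2
  j_contractive : ∀ f : Hb, ‖j f‖ ≤ ‖f‖
  j_compat : ∀ f : Hb, ∀ z ∈ Metric.ball (0:ℂ) 1, h2Fun (j f) z = hbFun f z
  mul : (ℂ → ℂ) → (H2 →L[ℂ] H2)
  mul_spec : ∀ φ : ℂ → ℂ, Hinf φ → ∀ f : H2, ∀ z ∈ Metric.ball (0:ℂ) 1,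
      h2Fun (mul φ f) z = φ z * h2Fun f z
  toepb : (ℂ → ℂ) → (Hb →L[ℂ] Hb)
  toepb_spec : ∀ φ : ℂ → ℂ, Hinf φ → ∀ f : Hb,
      j (toepb φ f) = ContinuousLinearMap.adjoint (mul φ) (j f)
  emb : H2 →ₗᵢ[ℂ] L2
  Pplus : L2 →L[ℂ] H2
  Pplus_spec : ∀ (g : L2) (f : H2), (inner ℂ (Pplus g) f : ℂ) = inner ℂ g (emb f)
  mulL2 : (ℂ → ℂ) → (L2 →L[ℂ] L2)
  mulL2_bound : ∀ (u : ℂ → ℂ) (M : ℝ), ContinuousOn u (Metric.sphere (0:ℂ) 1) →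
      (∀ ζ ∈ Metric.sphere (0:ℂ) 1, ‖u ζ‖ ≤ M) → ‖mulL2 u‖ ≤ M
  mulL2_add : ∀ u v : ℂ → ℂ, ContinuousOn u (Metric.sphere (0:ℂ) 1) →
      ContinuousOn v (Metric.sphere (0:ℂ) 1) → mulL2 (u + v) = mulL2 u + mulL2 v
  mulL2_comp : ∀ u v : ℂ → ℂ, ContinuousOn u (Metric.sphere (0:ℂ) 1) →
      ContinuousOn v (Metric.sphere (0:ℂ) 1) →
      mulL2 (u * v) = (mulL2 u).comp (mulL2 v)
  mulL2_adj : ∀ u : ℂ → ℂ, ContinuousOn u (Metric.sphere (0:ℂ) 1) →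
      ContinuousLinearMap.adjoint (mulL2 u) = mulL2 (fun z => (starRingEnd ℂ) (u z))
  mulL2_compat : ∀ φ : ℂ → ℂ, Hinf φ → ContinuousOn φ (closure (Metric.ball (0:ℂ) 1)) →
      ∀ f : H2, mulL2 φ (emb f) = emb (mul φ f)
  shiftb : Hb →L[ℂ] Hb
  shiftb_spec : ∀ f : Hb, ∀ z ∈ Metric.ball (0:ℂ) 1, z ≠ 0 →
      hbFun (shiftb f) z = (hbFun f z - hbFun f 0) / z

variable {H2 Hb L2 : Type*}
  [NormedAddCommGroup H2] [InnerProductSpace ℂ H2] [CompleteSpace H2]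
  [NormedAddCommGroup Hb] [InnerProductSpace ℂ Hb] [CompleteSpace Hb]
  [NormedAddCommGroup L2] [InnerProductSpace ℂ L2] [CompleteSpace L2]

/-!
Since `‖k_λ^b‖² = (1 - |b(λ)|²)/(1 - |λ|²)` and `|b(λ_n)|` stays below some `s < 1`, the norms
`‖k_{λ_n}^b‖` tend to infinity. Against a finite combination `g` of kernels, which is bounded on
the disc, the pairing `⟪k_{λ_n}^b/‖k_{λ_n}^b‖, g⟫ = g(λ_n)/‖k_{λ_n}^b‖` therefore tends to `0`;
these combinations are dense, and the normalized kernels have norm at most `1`, so the pairing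
tends to `0` against every `f ∈ ℋ(b)`.
-/

theorem tendsto_inner_zero_of_dense {𝕜 E ι : Type*} [RCLike 𝕜] [SeminormedAddCommGroup E]
    [InnerProductSpace 𝕜 E] {l : Filter ι} {u : ι → E} {C : ℝ} (hu : ∀ i, ‖u i‖ ≤ C)
    {s : Set E} (hs : Dense s)
    (h : ∀ g ∈ s, Tendsto (fun i => (inner 𝕜 (u i) g : 𝕜)) l (𝓝 0)) (f : E) :
    Tendsto (fun i => (inner 𝕜 (u i) f : 𝕜)) l (𝓝 0) := by
  have hbdd : ∃ C, ∀ i, ‖innerSL 𝕜 (u i)‖ ≤ C :=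
    ⟨C, fun i => (innerSL_apply_norm 𝕜 (u i)).trans_le (hu i)⟩
  have hequi : Equicontinuous fun i => ⇑(innerSL 𝕜 (u i)) :=
    ((NormedSpace.equicontinuous_TFAE fun i => innerSL 𝕜 (u i)).out 5 1).mp hbdd
  exact (hequi.isClosed_setOfPred_tendsto (l := l) continuous_const).closure_subset_iff.mpr
    h (hs f)

namespace DBR

variable {b : ℂ → ℂ} (D : DBR b H2 Hb L2)

theorem norm_hbker_sq {w : ℂ} (hw : w ∈ ball (0 : ℂ) 1) :
    ‖D.hbker w‖ ^ 2 = (1 - ‖b w‖ ^ 2) / (1 - ‖w‖ ^ 2) := by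
  have h := (inner_self_eq_norm_sq_to_K (𝕜 := ℂ) (D.hbker w)).symm
  rw [← D.hb_repro _ _ hw, D.hbker_eq _ hw _ hw, RCLike.conj_mul, RCLike.conj_mul] at h
  have h' : ((‖D.hbker w‖ ^ 2 : ℝ) : ℂ) = (((1 - ‖b w‖ ^ 2) / (1 - ‖w‖ ^ 2) : ℝ) : ℂ) := by
    push_cast
    exact h
  exact_mod_cast h'

theorem norm_hbFun_hbker_le (hb : ∀ z ∈ ball (0 : ℂ) 1, ‖b z‖ ≤ 1) {w z : ℂ}
    (hw : w ∈ ball (0 : ℂ) 1) (hz : z ∈ ball (0 : ℂ) 1) :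
    ‖D.hbFun (D.hbker w) z‖ ≤ 2 / (1 - ‖w‖) := by
  rw [mem_ball_zero_iff] at hw hz
  have hnum : ‖1 - (starRingEnd ℂ) (b w) * b z‖ ≤ 2 :=
    calc ‖1 - (starRingEnd ℂ) (b w) * b z‖ ≤ 1 + ‖b w‖ * ‖b z‖ := by
          simpa using norm_sub_le (1 : ℂ) ((starRingEnd ℂ) (b w) * b z)
      _ ≤ 2 := by
          nlinarith [hb w (mem_ball_zero_iff.2 hw), hb z (mem_ball_zero_iff.2 hz),
            norm_nonneg (b w), norm_nonneg (b z)]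
  have hden : 1 - ‖w‖ ≤ ‖1 - (starRingEnd ℂ) w * z‖ :=
    calc 1 - ‖w‖ ≤ 1 - ‖w‖ * ‖z‖ := by nlinarith [norm_nonneg w]
      _ ≤ ‖1 - (starRingEnd ℂ) w * z‖ := by
          simpa using norm_sub_norm_le (1 : ℂ) ((starRingEnd ℂ) w * z)
  rw [D.hbker_eq w (mem_ball_zero_iff.2 hw) z (mem_ball_zero_iff.2 hz), norm_div]
  exact div_le_div₀ zero_le_two hnum (by linarith) hden

theorem exists_bound_hbFun_of_mem_span (hb : ∀ z ∈ ball (0 : ℂ) 1, ‖b z‖ ≤ 1) {g : Hb}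
    (hg : g ∈ Submodule.span ℂ (D.hbker '' ball 0 1)) :
    ∃ C, ∀ z ∈ ball (0 : ℂ) 1, ‖D.hbFun g z‖ ≤ C := by
  induction hg using Submodule.span_induction with
  | mem x hx =>
    obtain ⟨w, hw, rfl⟩ := hx
    exact ⟨2 / (1 - ‖w‖), fun z hz => D.norm_hbFun_hbker_le hb hw hz⟩
  | zero => exact ⟨0, fun z _ => by simp⟩
  | add x y _ _ hx hy =>
    obtain ⟨Cx, hCx⟩ := hx
    obtain ⟨Cy, hCy⟩ := hy
    refine ⟨Cx + Cy, fun z hz => ?_⟩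
    rw [map_add, Pi.add_apply]
    exact (norm_add_le _ _).trans (add_le_add (hCx z hz) (hCy z hz))
  | smul c x _ hx =>
    obtain ⟨C, hC⟩ := hx
    refine ⟨‖c‖ * C, fun z hz => ?_⟩
    rw [map_smul, Pi.smul_apply, norm_smul]
    exact mul_le_mul_of_nonneg_left (hC z hz) (norm_nonneg c)

theorem dense_span_hbker : Dense (Submodule.span ℂ (D.hbker '' ball 0 1) : Set Hb) := by
  rw [Submodule.dense_iff_topologicalClosure_eq_top, Submodule.topologicalClosure_eq_top_iff,
    Submodule.eq_bot_iff]
  intro f hf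
  refine D.hbFun_inj f fun z hz => ?_
  rw [D.hb_repro f z hz]
  exact hf _ (Submodule.subset_span ⟨z, hz, rfl⟩)

theorem tendsto_norm_hbker_atTop (hb : ∀ z ∈ ball (0 : ℂ) 1, ‖b z‖ ≤ 1) {l : ℕ → ℂ}
    (hl : ∀ n, l n ∈ ball (0 : ℂ) 1) (hlim : Tendsto (fun n => ‖l n‖) atTop (𝓝 1))
    (hsup : limsup (fun n => ‖b (l n)‖) atTop < 1) :
    Tendsto (fun n => ‖D.hbker (l n)‖) atTop atTop := by
  obtain ⟨s, hsup_lt, hs⟩ := exists_between hsup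
  have hev : ∀ᶠ n in atTop, ‖b (l n)‖ < s :=
    eventually_lt_of_limsup_lt hsup_lt (isBoundedUnder_of ⟨1, fun n => hb _ (hl n)⟩)
  have hden : ∀ n, 0 < 1 - ‖l n‖ ^ 2 := fun n => by
    have := mem_ball_zero_iff.1 (hl n)
    nlinarith [norm_nonneg (l n)]
  have hden_inv : Tendsto (fun n => (1 - ‖l n‖ ^ 2)⁻¹) atTop atTop := by
    refine tendsto_inv_nhdsGT_zero.comp (tendsto_nhdsWithin_iff.2 ⟨?_, .of_forall hden⟩)
    simpa using (tendsto_const_nhds (x := (1 : ℝ))).sub (hlim.pow 2)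
  have hsq : Tendsto (fun n => ‖D.hbker (l n)‖ ^ 2) atTop atTop := by
    refine tendsto_atTop_mono' _ ?_ (hden_inv.const_mul_atTop (sub_pos.2 hs))
    filter_upwards [hev] with n hn
    have hbn := hb _ (hl n)
    rw [D.norm_hbker_sq (hl n), div_eq_mul_inv]
    -- `1 - s ≤ 1 - ‖b‖²` since `‖b‖² ≤ ‖b‖ < s`
    exact mul_le_mul_of_nonneg_right (by nlinarith [norm_nonneg (b (l n))])
      (inv_nonneg.2 (hden n).le)
  exact (Real.tendsto_sqrt_atTop.comp hsq).congr fun n => Real.sqrt_sq (norm_nonneg _)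

end DBR

/-- For `b` extreme and any sequence `(λ_n) ⊆ 𝔻` with `|λ_n| → 1` and
`limsup |b(λ_n)| < 1`, the normalized reproducing kernels `k_{λ_n}^b/‖k_{λ_n}^b‖_b`
converge weakly to `0` in `ℋ(b)`. -/
theorem statement19 (b : ℂ → ℂ) (D : DBR b H2 Hb L2) (hb : IsExtremePt b)
    (l : ℕ → ℂ) (hl : ∀ n, l n ∈ Metric.ball (0:ℂ) 1)
    (hlim : Filter.Tendsto (fun n => ‖l n‖) Filter.atTop (nhds 1))
    (hsup : Filter.limsup (fun n => ‖b (l n)‖) Filter.atTop < 1) :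
    ∀ f : Hb, Filter.Tendsto
      (fun n => (inner ℂ (‖D.hbker (l n)‖⁻¹ • D.hbker (l n)) f : ℂ))
      Filter.atTop (nhds 0) := by
  have hinv : Tendsto (fun n => ‖D.hbker (l n)‖⁻¹) atTop (𝓝 0) :=
    tendsto_inv_atTop_zero.comp (D.tendsto_norm_hbker_atTop hb.1.2 hl hlim hsup)
  refine tendsto_inner_zero_of_dense (C := 1) (fun n => ?_) D.dense_span_hbker fun g hg => ?_
  · rw [norm_smul, norm_inv, norm_norm]
    exact inv_mul_le_one_of_le₀ le_rfl (norm_nonneg _)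
  · obtain ⟨C, hC⟩ := D.exists_bound_hbFun_of_mem_span hb.1.2 hg
    refine squeeze_zero_norm (fun n => ?_) (by simpa using hinv.mul_const C)
    have hsmul : (inner ℂ (‖D.hbker (l n)‖⁻¹ • D.hbker (l n)) g : ℂ) =
        ‖D.hbker (l n)‖⁻¹ • inner ℂ (D.hbker (l n)) g :=
      inner_smul_real_left _ _ _
    rw [hsmul, ← D.hb_repro g _ (hl n), norm_smul, norm_inv, norm_norm]
    exact mul_le_mul_of_nonneg_left (hC _ (hl n)) (inv_nonneg.2 (norm_nonneg _))
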